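/- arXiv:1807.10217 — 2 statements merged into one kernel-verified Lean document; each statement's English description precedes it below -/
import Mathlib

section
/- If udim(Y) = w then udim(T(Y)) = w* and udim(T'(Y)) = w*, where w* is the reverse of w. In particular T and T' restrict to maps P(w) → P(w*). -/
open scoped BigOperators Classical

noncomputable section

/-- A triangular array of size `n`: entries `y i j` for `1 ≤ i ≤ n`, `1 ≤ j ≤ n - i + 1`
(zero outside this range), weakly decreasing along ladders: `y (i-1) (j+1) ≤ y i j`. -/
def IsTri (n : ℕ) (y : ℕ → ℕ → ℕ) : Prop :=
  (∀ i j, ¬(1 ≤ i ∧ i ≤ n ∧ 1 ≤ j ∧ j ≤ n - i + 1) → y i j = 0) ∧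
  (∀ i j, 2 ≤ i → i ≤ n → 1 ≤ j → j ≤ n - i + 1 → y (i - 1) (j + 1) ≤ y i j)

/-- The dimension vector of a triangular array: the `i`-th chute sum. -/
def udim (n : ℕ) (y : ℕ → ℕ → ℕ) (i : ℕ) : ℕ := ∑ j ∈ Finset.Icc 1 (n - i + 1), y i j

/-- The set `P(w)` of triangular arrays of size `n` with dimension vector `w`. -/
def InP (n : ℕ) (w : ℕ → ℕ) (y : ℕ → ℕ → ℕ) : Prop :=
  IsTri n y ∧ ∀ i, 1 ≤ i → i ≤ n → udim n y i = w i

/-- The set `B(w)`: families `(b i j)` for `1 ≤ i ≤ j ≤ n` (zero outside) with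
`∑ b i j • γ_{ij} = w`, i.e. for each `1 ≤ k ≤ n`, `∑_{i ≤ k ≤ j} b i j = w k`. -/
def InB (n : ℕ) (w : ℕ → ℕ) (b : ℕ → ℕ → ℕ) : Prop :=
  (∀ i j, ¬(1 ≤ i ∧ i ≤ j ∧ j ≤ n) → b i j = 0) ∧
  ∀ k, 1 ≤ k → k ≤ n → (∑ i ∈ Finset.Icc 1 k, ∑ j ∈ Finset.Icc k n, b i j) = w k

/-- The map `ν : P(w) → B(w)`. -/
def nuMap (n : ℕ) (y : ℕ → ℕ → ℕ) : ℕ → ℕ → ℕ := fun i j =>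
  if 1 ≤ i ∧ i ≤ j ∧ j ≤ n then y i (j - i + 1) - y (i - 1) (j - i + 2) else 0

/-- The map `ν̄ : B(w) → P(w)`. -/
def nubarMap (n : ℕ) (b : ℕ → ℕ → ℕ) : ℕ → ℕ → ℕ := fun i j =>
  if 1 ≤ i ∧ i ≤ n ∧ 1 ≤ j ∧ j ≤ n - i + 1 then ∑ h ∈ Finset.Icc 1 i, b h (i + j - 1) else 0

/-- `Raise Y i j` increments the entry in chute `i`, column `j`. -/
def Raise (y : ℕ → ℕ → ℕ) (i j : ℕ) : ℕ → ℕ → ℕ := fun p q =>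
  if p = i ∧ q = j then y p q + 1 else y p q

/-- `Lower Y i j` decrements the entry in chute `i`, column `j`. -/
def Lower (y : ℕ → ℕ → ℕ) (i j : ℕ) : ℕ → ℕ → ℕ := fun p q =>
  if p = i ∧ q = j then y p q - 1 else y p q

/-- `K_i(Y,k) = max({1} ∪ {j : 2 ≤ j ≤ k, y i j < y (i+1) (j-1)})`. -/
def Kval (y : ℕ → ℕ → ℕ) (i k : ℕ) : ℕ :=
  ((Finset.Icc 2 k).filter (fun j => y i j < y (i + 1) (j - 1))).sup id ⊔ 1

/-- Procedure `a`: `a(Y,i,k) = (Raise(Y,i,K_i(Y,k)), i-1, K_i(Y,k))`. -/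
def aStep (t : (ℕ → ℕ → ℕ) × ℕ × ℕ) : (ℕ → ℕ → ℕ) × ℕ × ℕ :=
  (Raise t.1 t.2.1 (Kval t.1 t.2.1 t.2.2), t.2.1 - 1, Kval t.1 t.2.1 t.2.2)

/-- Procedure `A_i`: apply `a` exactly `i` times starting from `(Y, i, n - i + 1)`. -/
def Aproc (n i : ℕ) (y : ℕ → ℕ → ℕ) : ℕ → ℕ → ℕ := (aStep^[i] (y, i, n - i + 1)).1

/-- `Del↘(Y)` : delete the first chute. -/
def delChute (y : ℕ → ℕ → ℕ) : ℕ → ℕ → ℕ := fun i j =>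
  if 1 ≤ i ∧ 1 ≤ j then y (i + 1) j else 0

/-- `Y ∪↘ Q` : adjoin `Q` as the new topmost chute. -/
def adjChute (y : ℕ → ℕ → ℕ) (q : ℕ → ℕ) : ℕ → ℕ → ℕ := fun i j =>
  if i = 0 then 0 else if i = 1 then q j else y (i - 1) j

/-- The set whose infimum is `I(Y,k)`; `I(Y,k) < ∞` iff this set is nonempty. -/
def Iset (n : ℕ) (y : ℕ → ℕ → ℕ) (k : ℕ) : Set ℕ := {j | k ≤ j ∧ j ≤ n ∧ 0 < y 1 j}

/-- `I(Y,k)`: the smallest `j ≥ k` with `y 1 j > 0`. -/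
def Idef (n : ℕ) (y : ℕ → ℕ → ℕ) (k : ℕ) : ℕ := sInf (Iset n y k)

/-- The set whose infimum is `J(Y,k)`; `J(Y,k) < ∞` iff this set is nonempty. -/
def Jset (n : ℕ) (y : ℕ → ℕ → ℕ) (k : ℕ) : Set ℕ :=
  {j | Idef n y k < j ∧ j ≤ n ∧ y 1 j < y 2 (j - 1)}

/-- `J(Y,k)`: the smallest `j > I(Y,k)` with `y 1 j < y 2 (j-1)`. -/
def Jdef (n : ℕ) (y : ℕ → ℕ → ℕ) (k : ℕ) : ℕ := sInf (Jset n y k)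

/-- Procedure `B`, by induction on the size `n`. -/
def Bproc : ℕ → (ℕ → ℕ → ℕ) → ℕ → ((ℕ → ℕ → ℕ) × ℕ)
  | 0, y, _ => (y, 1)
  | n + 1, y, k =>
    if (Jset (n + 1) y k).Nonempty then
      let zr := Bproc n (delChute y) (Jdef (n + 1) y k - 1)
      (Lower (adjChute zr.1 (y 1)) 1 (Idef (n + 1) y k), zr.2 + 1)
    else (Lower y 1 (Idef (n + 1) y k), 1)

/-- Apply `A_m^{y_{N+1-m,m} - y_{N-m,m+1}}` for `m = 1, …, M` (innermost `A_1`). -/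
def applyAs (N : ℕ) (y : ℕ → ℕ → ℕ) : ℕ → (ℕ → ℕ → ℕ) → (ℕ → ℕ → ℕ)
  | 0, z => z
  | m + 1, z => (Aproc N (m + 1))^[y (N - m) (m + 1) - y (N - m - 1) (m + 2)] (applyAs N y m z)

/-- `Del↗(Y)` : delete the last ladder (of an array of size `n`). -/
def delLadder (n : ℕ) (y : ℕ → ℕ → ℕ) : ℕ → ℕ → ℕ := fun i j =>
  if 1 ≤ i ∧ 1 ≤ j ∧ i + j ≤ n then y i j else 0

/-- The combinatorial Fourier transform `T`. -/
def Tmap : ℕ → (ℕ → ℕ → ℕ) → (ℕ → ℕ → ℕ)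
  | 0, y => y
  | 1, y => y
  | n + 2, y =>
      applyAs (n + 2) y (n + 2) (adjChute (Tmap (n + 1) (delLadder (n + 2) y)) (fun _ => 0))

/-- Iterate procedure `B` (with `k = 1`), recording the list of produced integers `q`. -/
def Biter (n : ℕ) (y : ℕ → ℕ → ℕ) : ℕ → ((ℕ → ℕ → ℕ) × List ℕ)
  | 0 => (y, [])
  | m + 1 =>
    let p := Biter n y m
    let b := Bproc n p.1 1
    (b.1, p.2 ++ [b.2])

/-- `Y ∪↗ P` : adjoin `P` as the new bottommost ladder (result of size `N`). -/
def adjLadder (N : ℕ) (z : ℕ → ℕ → ℕ) (p : ℕ → ℕ) : ℕ → ℕ → ℕ := fun i j =>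
  if 1 ≤ i ∧ 1 ≤ j ∧ i + j = N + 1 then p j else z i j

/-- The inverse combinatorial Fourier transform `T'`. -/
def Tinv : ℕ → (ℕ → ℕ → ℕ) → (ℕ → ℕ → ℕ)
  | 0, y => y
  | 1, y => y
  | n + 2, y =>
    let r := Biter (n + 2) y (udim (n + 2) y 1)
    adjLadder (n + 2) (Tinv (n + 1) (delChute r.1)) (fun j => r.2.countP (fun q => decide (j ≤ q)))

/-- The composition `x_{i+j-1} ∘ ⋯ ∘ x_{i+1} ∘ x_i` (`j` maps, starting at vertex `i`). -/
def chainMap (w : ℕ → ℕ) (x : ∀ m : ℕ, (Fin (w m) → ℂ) →ₗ[ℂ] (Fin (w (m + 1)) → ℂ)) (i : ℕ) :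
    ∀ j : ℕ, (Fin (w i) → ℂ) →ₗ[ℂ] (Fin (w (i + j)) → ℂ)
  | 0 => LinearMap.id
  | j + 1 => (x (i + j)).comp (chainMap w x i j)

/-- `u` is a Jordan basis of type `Y` for the representation `x`. -/
def IsJordanBasis (n : ℕ) (w : ℕ → ℕ) (y : ℕ → ℕ → ℕ)
    (x : ∀ m : ℕ, (Fin (w m) → ℂ) →ₗ[ℂ] (Fin (w (m + 1)) → ℂ))
    (u : ∀ m : ℕ, ℕ → ℕ → (Fin (w m) → ℂ)) : Prop :=
  (∀ i, 1 ≤ i → i ≤ n →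
    (LinearIndependent ℂ
      (fun p : {p : ℕ × ℕ // 1 ≤ p.1 ∧ p.1 ≤ n - i + 1 ∧ 1 ≤ p.2 ∧ p.2 ≤ y i p.1} =>
        u i p.1.1 p.1.2) ∧
    Submodule.span ℂ
      (Set.range (fun p : {p : ℕ × ℕ // 1 ≤ p.1 ∧ p.1 ≤ n - i + 1 ∧ 1 ≤ p.2 ∧ p.2 ≤ y i p.1} =>
        u i p.1.1 p.1.2)) = ⊤)) ∧
  (∀ i j k, 1 ≤ i → i + 1 ≤ n → 1 ≤ j → j ≤ n - i + 1 → 1 ≤ k → k ≤ y i j →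
    x i (u i j k) = if 2 ≤ j then u (i + 1) (j - 1) k else 0)

/-- `V` is a kernel flag of type `Y` (with the convention `V i 0 = ⊥`). -/
def IsKerFlag (n : ℕ) (w : ℕ → ℕ) (y : ℕ → ℕ → ℕ)
    (V : ∀ i : ℕ, ℕ → Submodule ℂ (Fin (w i) → ℂ)) : Prop :=
  ∀ i, 1 ≤ i → i ≤ n →
    V i 0 = ⊥ ∧
    (∀ j, j ≤ n - i → V i j ≤ V i (j + 1)) ∧
    V i (n - i + 1) = ⊤ ∧
    (∀ j, 1 ≤ j → j ≤ n - i + 1 → Module.finrank ℂ (V i j) = ∑ h ∈ Finset.Icc 1 j, y i h)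

/-- The representation `x` preserves the kernel flag `V`. -/
def PreservesFlag (n : ℕ) (w : ℕ → ℕ)
    (x : ∀ m : ℕ, (Fin (w m) → ℂ) →ₗ[ℂ] (Fin (w (m + 1)) → ℂ))
    (V : ∀ i : ℕ, ℕ → Submodule ℂ (Fin (w i) → ℂ)) : Prop :=
  ∀ i, 1 ≤ i → i + 1 ≤ n → ∀ j, 1 ≤ j → j ≤ n - i + 1 → ∀ v ∈ V i j,
    (j = 1 → x i v = 0) ∧ (2 ≤ j → x i v ∈ V (i + 1) (j - 1))

/-- The flag of kernels `V i j = ker (x_{i+j-1} ∘ ⋯ ∘ x_i)`. -/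
def kerFlag (w : ℕ → ℕ) (x : ∀ m : ℕ, (Fin (w m) → ℂ) →ₗ[ℂ] (Fin (w (m + 1)) → ℂ)) :
    ∀ i : ℕ, ℕ → Submodule ℂ (Fin (w i) → ℂ) := fun i j => LinearMap.ker (chainMap w x i j)

/-- The Lie-algebra stabilizer of the flag `V` inside `𝔤(w) = ∏ End(ℂ^{w_i})`. -/
def stabFlagSub (n : ℕ) (w : ℕ → ℕ) (V : ∀ i : ℕ, ℕ → Submodule ℂ (Fin (w i) → ℂ)) :
    Submodule ℂ (∀ i : Fin n, (Fin (w (i.val + 1)) → ℂ) →ₗ[ℂ] (Fin (w (i.val + 1)) → ℂ)) where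
  carrier := {g | ∀ (i : Fin n) (j : ℕ), 1 ≤ j → j ≤ n - (i.val + 1) + 1 →
    ∀ v ∈ V (i.val + 1) j, g i v ∈ V (i.val + 1) j}
  add_mem' := by
    intro a b ha hb i j h1 h2 v hv
    simpa using (V (i.val + 1) j).add_mem (ha i j h1 h2 v hv) (hb i j h1 h2 v hv)
  zero_mem' := by
    intro i j h1 h2 v hv
    simpa using (V (i.val + 1) j).zero_mem
  smul_mem' := by
    intro c a ha i j h1 h2 v hv
    simpa using (V (i.val + 1) j).smul_mem c (ha i j h1 h2 v hv)

/-- The linear space `E(w)^V` of representations preserving the kernel flag `V`. -/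
def presFlagSub (n : ℕ) (w : ℕ → ℕ) (V : ∀ i : ℕ, ℕ → Submodule ℂ (Fin (w i) → ℂ)) :
    Submodule ℂ (∀ i : Fin (n - 1), (Fin (w (i.val + 1)) → ℂ) →ₗ[ℂ] (Fin (w (i.val + 2)) → ℂ)) where
  carrier := {x | ∀ (i : Fin (n - 1)) (j : ℕ), 1 ≤ j → j ≤ n - (i.val + 1) + 1 →
    ∀ v ∈ V (i.val + 1) j,
      (j = 1 → x i v = 0) ∧ (2 ≤ j → x i v ∈ V (i.val + 2) (j - 1))}
  add_mem' := by
    intro a b ha hb i j h1 h2 v hv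
    obtain ⟨ha1, ha2⟩ := ha i j h1 h2 v hv
    obtain ⟨hb1, hb2⟩ := hb i j h1 h2 v hv
    constructor
    · intro hj
      simp [ha1 hj, hb1 hj]
    · intro hj
      simpa using (V (i.val + 2) (j - 1)).add_mem (ha2 hj) (hb2 hj)
  zero_mem' := by
    intro i j h1 h2 v hv
    constructor
    · intro _; simp
    · intro _
      simpa using (V (i.val + 2) (j - 1)).zero_mem
  smul_mem' := by
    intro c a ha i j h1 h2 v hv
    obtain ⟨ha1, ha2⟩ := ha i j h1 h2 v hv
    constructor
    · intro hj
      simp [ha1 hj]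
    · intro hj
      simpa using (V (i.val + 2) (j - 1)).smul_mem c (ha2 hj)

end

/-!
Each raising procedure `A_i` adds one box to every chute `1, …, i`, and each call of `B`
removes one box from every chute `1, …, q`, where `q` is the integer it returns.

For `T`: by induction, chute `i ≥ 2` of `T(Del↗ Y) ∪↘ 0` holds `w_{n+1-i} - y_{n+1-i,i}` boxes
(and chute `1` none), and `A_m^{e_m}`, `e_m = y_{n+1-m,m} - y_{n-m,m+1}`, adds `e_m` boxes to
each chute `i ≤ m`, so chute `i` gains the telescoping sum `Σ_{m ≥ i} e_m = y_{n+1-i,i}`.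
The `e_m` are honest differences because the entries of the last ladder decrease.

For `T'`: the `w_1` calls of `B` remove `p_j = #{m : q_m ≥ j}` boxes from chute `j`, so by
induction chute `i < n` of `T'(Del↘ Y^{(w_1)})` holds `w_{n+1-i} - p_{n+1-i}` boxes, which the
new ladder `P` tops up by `p_{n+1-i}`; chute `n` consists of `p_1 = w_1` alone.
-/

open Finset

lemma InP.congr {n : ℕ} {w w' : ℕ → ℕ} {y : ℕ → ℕ → ℕ} (hy : InP n w y)
    (hw : ∀ i, 1 ≤ i → i ≤ n → w i = w' i) : InP n w' y :=
  ⟨hy.1, fun i h1 h2 => (hy.2 i h1 h2).trans (hw i h1 h2)⟩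

lemma udim_self (n : ℕ) (y : ℕ → ℕ → ℕ) : udim n y n = y n 1 := by
  simp [udim]

lemma udim_Raise {n p c : ℕ} (z : ℕ → ℕ → ℕ) (hc1 : 1 ≤ c) (hc2 : c ≤ n - p + 1) (m : ℕ) :
    udim n (Raise z p c) m = udim n z m + if m = p then 1 else 0 := by
  unfold udim
  split_ifs with hm
  · subst hm
    have hc : c ∈ Icc 1 (n - m + 1) := mem_Icc.2 ⟨hc1, hc2⟩
    rw [sum_congr rfl fun j _ => show Raise z m c m j = z m j + if j = c then 1 else 0 by
      by_cases h : j = c <;> simp [Raise, h], sum_add_distrib, sum_ite_eq', if_pos hc]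
  · rw [add_zero]
    exact sum_congr rfl fun j _ => by simp [Raise, hm]

lemma Raise_Lower {y : ℕ → ℕ → ℕ} {p c : ℕ} (h : 1 ≤ y p c) : Raise (Lower y p c) p c = y := by
  funext a b
  by_cases hab : a = p ∧ b = c
  · obtain ⟨rfl, rfl⟩ := hab
    simp only [Raise, Lower, and_self, if_true]
    omega
  · simp [Raise, Lower, hab]

lemma udim_Lower {n p c : ℕ} {y : ℕ → ℕ → ℕ} (hc1 : 1 ≤ c) (hc2 : c ≤ n - p + 1)
    (hpos : 1 ≤ y p c) (m : ℕ) :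
    udim n (Lower y p c) m + (if m = p then 1 else 0) = udim n y m := by
  rw [← udim_Raise _ hc1 hc2, Raise_Lower hpos]

lemma Lower_apply_self (y : ℕ → ℕ → ℕ) (p c j : ℕ) :
    Lower y p c p j = y p j - if j = c then 1 else 0 := by
  by_cases h : j = c <;> simp [Lower, h]

lemma IsTri.Lower_one {n : ℕ} {y : ℕ → ℕ → ℕ} (hy : IsTri n y) (c : ℕ) :
    IsTri n (Lower y 1 c) := by
  constructor
  · intro i j hij
    have := hy.1 i j hij
    simp only [Lower]
    split_ifs <;> simp [this]
  · intro i j h2 hin hj1 hj2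
    have hle := hy.2 i j h2 hin hj1 hj2
    simp only [Lower, if_neg (show ¬(i = 1 ∧ j = c) by omega)]
    split_ifs
    exacts [(Nat.sub_le _ _).trans hle, hle]

lemma one_le_Kval (y : ℕ → ℕ → ℕ) (i k : ℕ) : 1 ≤ Kval y i k := le_sup_right

lemma Kval_le (y : ℕ → ℕ → ℕ) (i : ℕ) {k : ℕ} (hk : 1 ≤ k) : Kval y i k ≤ k :=
  sup_le (Finset.sup_le fun _ hj => (mem_Icc.1 (mem_filter.1 hj).1).2) hk

lemma lt_of_two_le_Kval {y : ℕ → ℕ → ℕ} {i k : ℕ} (h : 2 ≤ Kval y i k) :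
    y i (Kval y i k) < y (i + 1) (Kval y i k - 1) := by
  set s := (Icc 2 k).filter (fun j => y i j < y (i + 1) (j - 1))
  have hK : Kval y i k = s.sup id ⊔ 1 := rfl
  have hsup : 2 ≤ s.sup id := by omega
  have hne : s.Nonempty := by
    by_contra h
    simp [Finset.not_nonempty_iff_eq_empty.1 h] at hsup
  obtain ⟨b, hb, hbeq⟩ := exists_mem_eq_sup s hne id
  have hKb : Kval y i k = b := by
    rw [hbeq] at hsup
    rw [hK, hbeq]
    exact sup_eq_left.2 (by simp only [id] at hsup ⊢; omega)
  rw [hKb]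
  exact (mem_filter.1 hb).2

/-- Raising at `K = K_i(Y, k)` keeps the ladders weakly decreasing since either `K = 1` or
`y_{i,K} < y_{i+1,K-1}`. -/
lemma IsTri.Raise_Kval {n : ℕ} {z : ℕ → ℕ → ℕ} (hz : IsTri n z) {p k : ℕ} (hp1 : 1 ≤ p)
    (hpn : p ≤ n) (hK : Kval z p k ≤ n - p + 1) : IsTri n (Raise z p (Kval z p k)) := by
  have hK1 : 1 ≤ Kval z p k := one_le_Kval z p k
  constructor
  · intro i j hij
    have hne : ¬(i = p ∧ j = Kval z p k) := by
      rintro ⟨rfl, rfl⟩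
      exact hij ⟨hp1, hpn, hK1, hK⟩
    simp only [Raise, if_neg hne]
    exact hz.1 i j hij
  · intro i j h2 hin hj1 hj2
    have hle := hz.2 i j h2 hin hj1 hj2
    simp only [Raise]
    split_ifs with ha hb hb
    · omega
    · obtain ⟨rfl, hjK⟩ := ha
      have hlt := lt_of_two_le_Kval (y := z) (i := i - 1) (k := k) (by omega)
      rw [← hjK, show i - 1 + 1 = i by omega, Nat.add_sub_cancel] at hlt
      omega
    · omega
    · exact hle

def ShiftsUdim (n : ℕ) (f : (ℕ → ℕ → ℕ) → ℕ → ℕ → ℕ) (δ : ℕ → ℕ) : Prop :=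
  ∀ z, IsTri n z → IsTri n (f z) ∧ ∀ m, udim n (f z) m = udim n z m + δ m

section ShiftsUdim

variable {n : ℕ} {f g : (ℕ → ℕ → ℕ) → ℕ → ℕ → ℕ} {δ ε : ℕ → ℕ}

lemma ShiftsUdim.comp (hf : ShiftsUdim n f δ) (hg : ShiftsUdim n g ε) :
    ShiftsUdim n (f ∘ g) (fun m => ε m + δ m) := fun z hz =>
  let ⟨hgz, hgu⟩ := hg z hz
  let ⟨hfz, hfu⟩ := hf (g z) hgz
  ⟨hfz, fun m => by rw [Function.comp_apply, hfu, hgu, add_assoc]⟩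

lemma ShiftsUdim.iterate (hf : ShiftsUdim n f δ) (e : ℕ) :
    ShiftsUdim n f^[e] (fun m => e * δ m) := by
  induction e with
  | zero => exact fun z hz => ⟨hz, fun m => by simp⟩
  | succ e ih =>
    rw [Function.iterate_succ]
    convert ih.comp hf using 2 with m
    ring

end ShiftsUdim

lemma aStep_iterate {n : ℕ} : ∀ (t i k : ℕ) (z : ℕ → ℕ → ℕ), IsTri n z → t ≤ i → i ≤ n →
    1 ≤ k → k ≤ n - i + 1 →
    IsTri n (aStep^[t] (z, i, k)).1 ∧
      ∀ m, udim n (aStep^[t] (z, i, k)).1 m = udim n z m + if i - t < m ∧ m ≤ i then 1 else 0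
  | 0, i, k, z, hz, _, _, _, _ => ⟨hz, fun m => by simp⟩
  | t + 1, i, k, z, hz, hti, hin, hk1, hk2 => by
    have hK1 := one_le_Kval z i k
    have hKn : Kval z i k ≤ n - i + 1 := (Kval_le z i hk1).trans hk2
    rw [Function.iterate_succ_apply]
    obtain ⟨hT, hU⟩ := aStep_iterate t (i - 1) _ _ (hz.Raise_Kval (by omega) hin hKn)
      (by omega) (by omega) hK1 (by omega)
    refine ⟨hT, fun m => ?_⟩
    rw [aStep, hU, udim_Raise z hK1 hKn]
    split_ifs <;> omega

lemma shiftsUdim_Aproc {n i : ℕ} (hin : i ≤ n) :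
    ShiftsUdim n (Aproc n i) (fun m => if 1 ≤ m ∧ m ≤ i then 1 else 0) := fun z hz => by
  obtain ⟨hT, hU⟩ := aStep_iterate i i (n - i + 1) z hz le_rfl hin (by omega) le_rfl
  refine ⟨hT, fun m => ?_⟩
  rw [Aproc, hU, Nat.sub_self]
  rfl

lemma IsTri.antitoneOn_lastLadder {N : ℕ} {y : ℕ → ℕ → ℕ} (hy : IsTri N y) :
    AntitoneOn (fun j => y (N + 1 - j) j) (Set.Icc 1 (N + 1)) := by
  refine antitoneOn_of_add_one_le Set.ordConnected_Icc fun j _ hj hj1 => ?_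
  simp only [Set.mem_Icc] at hj hj1
  rcases lt_or_eq_of_le hj1.2 with h | h
  · have := hy.2 (N + 1 - j) j (by omega) (by omega) hj.1 (by omega)
    rwa [show N + 1 - j - 1 = N + 1 - (j + 1) by omega] at this
  · rw [hy.1 (N + 1 - (j + 1)) (j + 1) (by omega)]
    exact Nat.zero_le _

lemma shiftsUdim_applyAs {N : ℕ} {y : ℕ → ℕ → ℕ} (hy : IsTri N y) {M : ℕ} (hM : M ≤ N) :
    ShiftsUdim N (applyAs N y M)
      (fun c => if 1 ≤ c ∧ c ≤ M then y (N + 1 - c) c - y (N - M) (M + 1) else 0) := by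
  induction M with
  | zero => exact fun z hz => ⟨hz, fun m => by dsimp only; rw [if_neg (by omega), add_zero]; rfl⟩
  | succ M ih =>
    have key := ((shiftsUdim_Aproc hM).iterate
      (y (N - M) (M + 1) - y (N - M - 1) (M + 2))).comp (ih (by omega))
    have hdef : applyAs N y (M + 1) =
        (Aproc N (M + 1))^[y (N - M) (M + 1) - y (N - M - 1) (M + 2)] ∘ applyAs N y M := rfl
    rw [hdef]
    convert key using 2 with c
    have anti := hy.antitoneOn_lastLadder
    have hstep : y (N - M - 1) (M + 2) ≤ y (N - M) (M + 1) := by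
      have := anti (a := M + 1) (b := M + 2) ⟨by omega, by omega⟩ ⟨by omega, by omega⟩ (by omega)
      simpa [show N + 1 - (M + 2) = N - M - 1 by omega, show N + 1 - (M + 1) = N - M by omega]
    rw [show N - (M + 1) = N - M - 1 by omega, show M + 1 + 1 = M + 2 from rfl]
    by_cases hcM : 1 ≤ c ∧ c ≤ M
    · have hle := anti (a := c) (b := M + 1) ⟨by omega, by omega⟩ ⟨by omega, by omega⟩ (by omega)
      simp only [show N + 1 - (M + 1) = N - M by omega] at hle
      rw [if_pos ⟨hcM.1, by omega⟩, if_pos hcM, if_pos ⟨hcM.1, by omega⟩]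
      omega
    · by_cases hc : c = M + 1
      · subst hc
        simp [show N + 1 - (M + 1) = N - M by omega]
      · rw [if_neg (by omega), if_neg hcM, if_neg (by omega), mul_zero, add_zero]

lemma IsTri.delLadder {n : ℕ} {y : ℕ → ℕ → ℕ} (hy : IsTri (n + 1) y) :
    IsTri n (delLadder (n + 1) y) := by
  constructor
  · intro i j hij
    unfold _root_.delLadder
    split_ifs
    · exact hy.1 i j (by omega)
    · rfl
  · intro i j h2 hin hj1 hj2
    unfold _root_.delLadder
    rw [if_pos ⟨by omega, by omega, by omega⟩, if_pos ⟨by omega, by omega, by omega⟩]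
    exact hy.2 i j h2 (by omega) hj1 (by omega)

lemma udim_delLadder {n i : ℕ} (y : ℕ → ℕ → ℕ) (hi1 : 1 ≤ i) (hin : i ≤ n) :
    udim (n + 1) y i = udim n (delLadder (n + 1) y) i + y i (n + 2 - i) := by
  unfold udim
  rw [show n + 1 - i + 1 = n - i + 1 + 1 by omega, sum_Icc_succ_top (by omega),
    show n - i + 1 + 1 = n + 2 - i by omega]
  congr 1
  refine sum_congr rfl fun j hj => ?_
  rw [mem_Icc] at hj
  rw [delLadder, if_pos ⟨hi1, by omega, by omega⟩]

lemma IsTri.adjChute {n : ℕ} {z : ℕ → ℕ → ℕ} {q : ℕ → ℕ} (hz : IsTri n z)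
    (hq : ∀ j, ¬(1 ≤ j ∧ j ≤ n + 1) → q j = 0) (hqz : ∀ j, 1 ≤ j → j ≤ n → q (j + 1) ≤ z 1 j) :
    IsTri (n + 1) (adjChute z q) := by
  constructor
  · intro i j hij
    unfold _root_.adjChute
    split_ifs with h0 h1
    · rfl
    · exact hq j (by omega)
    · exact hz.1 (i - 1) j (by omega)
  · intro i j h2 hin hj1 hj2
    unfold _root_.adjChute
    rw [if_neg (by omega : i - 1 ≠ 0), if_neg (by omega : i ≠ 0), if_neg (by omega : i ≠ 1)]
    split_ifs with h
    · rw [h]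
      exact hqz j hj1 (by omega)
    · exact hz.2 (i - 1) j (by omega) (by omega) hj1 (by omega)

lemma udim_adjChute_one (n : ℕ) (z : ℕ → ℕ → ℕ) (q : ℕ → ℕ) :
    udim (n + 1) (adjChute z q) 1 = ∑ j ∈ Icc 1 (n + 1), q j := by
  simp [udim, adjChute]

lemma udim_adjChute {n i : ℕ} (z : ℕ → ℕ → ℕ) (q : ℕ → ℕ) (hi : 2 ≤ i) :
    udim (n + 1) (adjChute z q) i = udim n z (i - 1) := by
  unfold udim
  rw [show n + 1 - i + 1 = n - (i - 1) + 1 by omega]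
  exact sum_congr rfl fun j _ => by rw [adjChute, if_neg (by omega), if_neg (by omega)]

theorem Tmap_mem_P : ∀ (n : ℕ) (y : ℕ → ℕ → ℕ), IsTri n y →
    InP n (fun i => udim n y (n + 1 - i)) (Tmap n y)
  | 0, _, hy => ⟨hy, fun _ h1 h2 => by omega⟩
  | 1, _, hy => ⟨hy, fun i h1 h2 => by obtain rfl : i = 1 := (by omega); rfl⟩
  | n + 2, y, hy => by
    obtain ⟨hz, hzu⟩ := Tmap_mem_P (n + 1) _ hy.delLadder
    obtain ⟨hT, hTu⟩ := shiftsUdim_applyAs hy le_rfl _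
      (hz.adjChute (fun _ _ => rfl) fun _ _ _ => Nat.zero_le _)
    refine ⟨hT, fun i hi1 hin => ?_⟩
    rw [Tmap, hTu]
    dsimp only
    rw [if_pos ⟨hi1, hin⟩, Nat.sub_self, hy.1 0 _ (by omega), Nat.sub_zero]
    rcases eq_or_lt_of_le hi1 with rfl | hi2
    · simp [udim_adjChute_one, udim_self]
    · rw [udim_adjChute _ _ hi2, hzu (i - 1) (by omega) (by omega),
        udim_delLadder y (i := n + 3 - i) (by omega) (by omega)]
      dsimp only
      congr 2 <;> omega

lemma IsTri.delChute {n : ℕ} {y : ℕ → ℕ → ℕ} (hy : IsTri (n + 1) y) : IsTri n (delChute y) := by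
  constructor
  · intro i j hij
    unfold _root_.delChute
    split_ifs
    · exact hy.1 (i + 1) j (by omega)
    · rfl
  · intro i j h2 hin hj1 hj2
    unfold _root_.delChute
    rw [if_pos ⟨by omega, by omega⟩, if_pos ⟨by omega, by omega⟩, Nat.sub_add_cancel (by omega)]
    simpa using hy.2 (i + 1) j (by omega) (by omega) hj1 (by omega)

lemma udim_delChute {n i : ℕ} (y : ℕ → ℕ → ℕ) (hi : 1 ≤ i) :
    udim n (delChute y) i = udim (n + 1) y (i + 1) := by
  unfold udim
  rw [show n + 1 - (i + 1) + 1 = n - i + 1 by omega]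
  exact sum_congr rfl fun j hj => by rw [delChute, if_pos ⟨hi, (mem_Icc.1 hj).1⟩]

lemma Idef_mem {n : ℕ} {y : ℕ → ℕ → ℕ} {k : ℕ} (hy : IsTri n y) (h : (Iset n y k).Nonempty) :
    1 ≤ Idef n y k ∧ k ≤ Idef n y k ∧ Idef n y k ≤ n ∧ 0 < y 1 (Idef n y k) := by
  obtain ⟨hk, hn, hpos⟩ : Idef n y k ∈ Iset n y k := Nat.sInf_mem h
  refine ⟨?_, hk, hn, hpos⟩
  by_contra h0
  exact hpos.ne' (hy.1 1 _ (by omega))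

lemma Idef_eq_self {n : ℕ} {y : ℕ → ℕ → ℕ} {k : ℕ} (h : k ∈ Iset n y k) : Idef n y k = k :=
  le_antisymm (Nat.sInf_le h) (Nat.sInf_mem ⟨k, h⟩).1

lemma Iset_nonempty_of_udim_pos {n : ℕ} {y : ℕ → ℕ → ℕ} (hy : IsTri n y) (h : 0 < udim n y 1) :
    (Iset n y 1).Nonempty := by
  obtain ⟨j, hj, hpos⟩ := exists_ne_zero_of_sum_ne_zero h.ne'
  rw [mem_Icc] at hj
  have hjn : j ≤ n := by
    by_contra hjn
    exact hpos (hy.1 1 j (by omega))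
  exact ⟨j, hj.1, hjn, Nat.pos_of_ne_zero hpos⟩

/-- Properties of `B(Y, k) = (Y', q)`; knowing the first chute of `Y'` is what lets the
recursion of `B` go through. -/
structure IsBResult (n : ℕ) (y : ℕ → ℕ → ℕ) (k : ℕ) (r : (ℕ → ℕ → ℕ) × ℕ) : Prop where
  isTri : IsTri n r.1
  one_le : 1 ≤ r.2
  udim_add : ∀ m, 1 ≤ m → m ≤ n → udim n r.1 m + (if m ≤ r.2 then 1 else 0) = udim n y m
  apply_one : ∀ j, r.1 1 j = y 1 j - if j = Idef n y k then 1 else 0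

lemma isBResult_Lower {n : ℕ} {y : ℕ → ℕ → ℕ} {k : ℕ} (hy : IsTri n y)
    (hI : (Iset n y k).Nonempty) : IsBResult n y k (Lower y 1 (Idef n y k), 1) := by
  obtain ⟨hI1, -, hIn, hIpos⟩ := Idef_mem hy hI
  refine ⟨hy.Lower_one _, le_rfl, fun m hm1 _ => ?_, Lower_apply_self y 1 _⟩
  rw [← udim_Lower hI1 (by omega) hIpos m]
  congr 1
  split_ifs <;> omega

lemma mem_Iset_delChute_Jdef {n : ℕ} {y : ℕ → ℕ → ℕ} {k : ℕ} (hy : IsTri (n + 1) y)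
    (hI : (Iset (n + 1) y k).Nonempty) (hJ : (Jset (n + 1) y k).Nonempty) :
    Jdef (n + 1) y k - 1 ∈ Iset n (delChute y) (Jdef (n + 1) y k - 1) := by
  obtain ⟨hI1, -⟩ := Idef_mem hy hI
  obtain ⟨hIJ, hJn, hlt⟩ : Jdef (n + 1) y k ∈ Jset (n + 1) y k := Nat.sInf_mem hJ
  refine ⟨le_rfl, by omega, ?_⟩
  rw [delChute, if_pos ⟨le_rfl, by omega⟩]
  exact (Nat.zero_le _).trans_lt hlt

/-- The recursive case of `B`: since `y_{1,J} < y_{2,J-1}`, removing a box from column `J - 1`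
of the second chute leaves room for the first chute `y_{1,·}` on top. -/
lemma IsBResult.Lower_adjChute {n : ℕ} {y : ℕ → ℕ → ℕ} {k : ℕ} (hy : IsTri (n + 1) y)
    (hI : (Iset (n + 1) y k).Nonempty) (hJ : (Jset (n + 1) y k).Nonempty)
    {r : (ℕ → ℕ → ℕ) × ℕ} (hr : IsBResult n (delChute y) (Jdef (n + 1) y k - 1) r) :
    IsBResult (n + 1) y k (Lower (adjChute r.1 (y 1)) 1 (Idef (n + 1) y k), r.2 + 1) := by
  obtain ⟨hI1, -, hIn, hIpos⟩ := Idef_mem hy hI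
  obtain ⟨hIJ, hJn, hlt⟩ : Jdef (n + 1) y k ∈ Jset (n + 1) y k := Nat.sInf_mem hJ
  have hIdef := Idef_eq_self (mem_Iset_delChute_Jdef hy hI hJ)
  have hfirst : adjChute r.1 (y 1) 1 = y 1 := by funext j; simp [adjChute]
  have hroom : ∀ j, 1 ≤ j → j ≤ n → y 1 (j + 1) ≤ r.1 1 j := by
    intro j hj1 hjn
    rw [hr.apply_one, hIdef, delChute, if_pos ⟨le_rfl, hj1⟩]
    have hle : y 1 (j + 1) ≤ y 2 j := hy.2 2 j le_rfl (by omega) hj1 (by omega)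
    show y 1 (j + 1) ≤ y 2 j - _
    split_ifs with h
    · rw [h, Nat.sub_add_cancel (by omega)]
      omega
    · exact hle
  have hadj : IsTri (n + 1) (adjChute r.1 (y 1)) :=
    hr.isTri.adjChute (fun j hj => hy.1 1 j (by omega)) hroom
  refine ⟨hadj.Lower_one _, by omega, fun m hm1 hmn => ?_, ?_⟩
  · have hlow := udim_Lower (n := n + 1) (p := 1) (y := adjChute r.1 (y 1)) hI1 (by omega)
      (by rw [hfirst]; omega) m
    rcases eq_or_lt_of_le hm1 with rfl | hm2
    · rw [if_pos rfl, udim_adjChute_one] at hlow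
      rw [if_pos (by omega), hlow]
      rfl
    · rw [if_neg (by omega), add_zero, udim_adjChute _ _ hm2] at hlow
      have hrec := hr.udim_add (m - 1) (by omega) (by omega)
      rw [udim_delChute _ (by omega), Nat.sub_add_cancel hm1] at hrec
      rw [hlow, ← hrec]
      congr 1
      split_ifs <;> omega
  · intro j
    dsimp only
    rw [Lower_apply_self, hfirst]

theorem isBResult_Bproc : ∀ (n : ℕ) (y : ℕ → ℕ → ℕ) (k : ℕ), IsTri n y →
    (Iset n y k).Nonempty → IsBResult n y k (Bproc n y k)
  | 0, _, _, hy, hI => by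
    obtain ⟨h1, -, h0, -⟩ := Idef_mem hy hI
    omega
  | n + 1, y, k, hy, hI => by
    rw [Bproc]
    split_ifs with hJ
    · exact IsBResult.Lower_adjChute hy hI hJ
        (isBResult_Bproc n _ _ hy.delChute ⟨_, mem_Iset_delChute_Jdef hy hI hJ⟩)
    · exact isBResult_Lower hy hI

lemma Biter_spec {N : ℕ} {y : ℕ → ℕ → ℕ} (hy : IsTri N y) :
    ∀ m, m ≤ udim N y 1 →
      IsTri N (Biter N y m).1 ∧ (Biter N y m).2.length = m ∧ (∀ q ∈ (Biter N y m).2, 1 ≤ q) ∧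
      ∀ i, 1 ≤ i → i ≤ N →
        udim N (Biter N y m).1 i + (Biter N y m).2.countP (fun q => decide (i ≤ q)) =
          udim N y i
  | 0, _ => ⟨hy, rfl, by simp [Biter], fun i _ _ => by simp [Biter]⟩
  | m + 1, hm => by
    obtain ⟨hT, hlen, hq1, hu⟩ := Biter_spec hy m (by omega)
    have hcount : (Biter N y m).2.countP (fun q => decide (1 ≤ q)) = m :=
      (List.countP_eq_length.2 fun q hq => by simpa using hq1 q hq).trans hlen
    have hN : 1 ≤ N := by
      obtain ⟨h1, -, hN, -⟩ := Idef_mem hy (Iset_nonempty_of_udim_pos hy (by omega))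
      omega
    have hpos : 0 < udim N (Biter N y m).1 1 := by
      have := hu 1 le_rfl hN
      omega
    have hB := isBResult_Bproc N _ 1 hT (Iset_nonempty_of_udim_pos hT hpos)
    refine ⟨hB.isTri, by simp [Biter, hlen], ?_, fun i hi1 hiN => ?_⟩
    · intro q hq
      simp only [Biter, List.mem_append, List.mem_singleton] at hq
      rcases hq with hq | rfl
      exacts [hq1 q hq, hB.one_le]
    · have hstep := hB.udim_add i hi1 hiN
      have hprev := hu i hi1 hiN
      simp only [Biter, List.countP_append, List.countP_singleton, decide_eq_true_eq]
      split_ifs at hstep ⊢ <;> omega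

lemma IsTri.adjLadder {n : ℕ} {z : ℕ → ℕ → ℕ} {p : ℕ → ℕ} (hz : IsTri n z)
    (hp : ∀ j, 1 ≤ j → j ≤ n → p (j + 1) ≤ p j) : IsTri (n + 1) (adjLadder (n + 1) z p) := by
  constructor
  · intro i j hij
    unfold _root_.adjLadder
    rw [if_neg (by omega)]
    exact hz.1 i j (by omega)
  · intro i j h2 hin hj1 hj2
    unfold _root_.adjLadder
    by_cases hsum : i + j = n + 2
    · rw [if_pos ⟨by omega, by omega, by omega⟩, if_pos ⟨by omega, by omega, hsum⟩]
      exact hp j hj1 (by omega)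
    · rw [if_neg (by omega), if_neg (by omega)]
      exact hz.2 i j h2 (by omega) hj1 (by omega)

lemma udim_adjLadder {n i : ℕ} (z : ℕ → ℕ → ℕ) (p : ℕ → ℕ) (hi1 : 1 ≤ i) (hin : i ≤ n) :
    udim (n + 1) (adjLadder (n + 1) z p) i = udim n z i + p (n + 2 - i) := by
  unfold udim
  rw [show n + 1 - i + 1 = n - i + 1 + 1 by omega, sum_Icc_succ_top (by omega),
    adjLadder, if_pos ⟨hi1, by omega, by omega⟩, show n - i + 1 + 1 = n + 2 - i by omega]
  congr 1
  refine sum_congr rfl fun j hj => ?_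
  rw [mem_Icc] at hj
  rw [adjLadder, if_neg (by omega)]

lemma udim_adjLadder_self (n : ℕ) (z : ℕ → ℕ → ℕ) (p : ℕ → ℕ) :
    udim (n + 1) (adjLadder (n + 1) z p) (n + 1) = p 1 := by
  simp [udim_self, adjLadder]

theorem Tinv_mem_P : ∀ (n : ℕ) (y : ℕ → ℕ → ℕ), IsTri n y →
    InP n (fun i => udim n y (n + 1 - i)) (Tinv n y)
  | 0, _, hy => ⟨hy, fun _ h1 h2 => by omega⟩
  | 1, _, hy => ⟨hy, fun i h1 h2 => by obtain rfl : i = 1 := (by omega); rfl⟩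
  | n + 2, y, hy => by
    obtain ⟨hr, hlen, hq1, hru⟩ := Biter_spec hy _ le_rfl
    set r := Biter (n + 2) y (udim (n + 2) y 1)
    obtain ⟨hz, hzu⟩ := Tinv_mem_P (n + 1) _ hr.delChute
    have hp : ∀ j, r.2.countP (fun q => decide (j + 1 ≤ q)) ≤
        r.2.countP (fun q => decide (j ≤ q)) :=
      fun j => List.countP_mono_left fun q _ h => by simp only [decide_eq_true_eq] at *; omega
    refine ⟨hz.adjLadder fun j _ _ => hp j, fun i hi1 hin => ?_⟩
    show udim (n + 2) (adjLadder (n + 1 + 1) _ _) i = _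
    rcases eq_or_lt_of_le hin with rfl | hi
    · rw [udim_adjLadder_self, List.countP_eq_length.2 fun q hq => by simpa using hq1 q hq, hlen]
      dsimp only
      rw [Nat.add_sub_cancel_left]
    · have hremoved := hru (n + 3 - i) (by omega) (by omega)
      rw [udim_adjLadder _ _ hi1 (by omega), hzu i hi1 (by omega)]
      dsimp only
      rw [udim_delChute _ (by omega), show n + 1 + 1 - i + 1 = n + 3 - i by omega,
        show n + 1 + 2 - i = n + 3 - i by omega]
      exact hremoved

theorem Tmap_Tinv_mem_P_reverse_general (n : ℕ) (w : ℕ → ℕ)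
    (y : ℕ → ℕ → ℕ) (hy : InP n w y) :
    InP n (fun i => w (n + 1 - i)) (Tmap n y) ∧
      InP n (fun i => w (n + 1 - i)) (Tinv n y) := by
  have hw : ∀ i, 1 ≤ i → i ≤ n → udim n y (n + 1 - i) = w (n + 1 - i) :=
    fun i h1 h2 => hy.2 _ (by omega) (by omega)
  exact ⟨(Tmap_mem_P n y hy.1).congr hw, (Tinv_mem_P n y hy.1).congr hw⟩

/-- If `udim Y = w` then `udim (T Y) = w*` and `udim (T' Y) = w*`;
in particular `T` and `T'` restrict to maps `P(w) → P(w*)`. -/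
theorem Tmap_Tinv_mem_P_reverse (n : ℕ) (hn : 1 ≤ n) (w : ℕ → ℕ)
    (y : ℕ → ℕ → ℕ) (hy : InP n w y) :
    InP n (fun i => w (n + 1 - i)) (Tmap n y) ∧
      InP n (fun i => w (n + 1 - i)) (Tinv n y) :=
  Tmap_Tinv_mem_P_reverse_general n w y hy
end

section
/- Let x be a quiver representation admitting a Jordan basis of type Y (that is, x ∈ O_Y), and suppose there is a short exact sequence 0 → M(x) → M(x') → M(e_i) → 0 of representations of the equioriented A_n quiver, where M(e_i) is the simple representation at vertex i. Let v ∈ M(x') have nonzero image in M(e_i), and let k be the smallest integer with (x')^k(v) = 0. If x' ∈ O_{Y'}, then Y' = Raise(Y, i, j) for some j with 1 ≤ j ≤ K_i(Y, k). -/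
/-!
Write `S_a(ℓ) = ∑_{j ≤ ℓ} y_{aj}`; a Jordan basis of type `Y` shows that
`S_a(ℓ) + rank (x^ℓ at vertex a) = dim M(x)_a`. Since `M(x')_i = φ(M(x)_i) ⊕ ℂ v` and `φ` is an
isomorphism at the other vertices, `im x'^ℓ = φ(im x^ℓ) + ℂ x'^ℓ v`, so the ranks of `x'^ℓ` and
`x^ℓ` differ only at vertex `i`, by one exactly when `x'^ℓ v ∉ φ(im x^ℓ)`. Membership
`x'^ℓ v ∈ φ(im x^ℓ)` passes from `ℓ` to `ℓ + 1`; if `j` is the first `ℓ` where it holds, then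
`S'` and `S` agree except that `S'_i(ℓ) = S_i(ℓ) + 1` for `ℓ ≥ j`, i.e. `Y' = Raise(Y, i, j)`.
Finally `j ≤ k` because `x'^k v = 0`, and for `j ≥ 2` the ladder inequality of `Y'` gives
`y_{ij} < y_{i+1,j-1}`, so `j ≤ K_i(Y, k)`.
-/

open scoped BigOperators Classical

open Finset LinearMap Module

theorem LinearMap.finrank_range_of_comp_eq_of_sup_span_eq_top {K V W V' W' : Type*}
    [DivisionRing K] [AddCommGroup V] [Module K V] [AddCommGroup W] [Module K W]
    [AddCommGroup V'] [Module K V'] [AddCommGroup W'] [Module K W'] [FiniteDimensional K W']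
    {f : V →ₗ[K] W} {f' : V' →ₗ[K] W'} {φ : V →ₗ[K] V'} {ψ : W →ₗ[K] W'}
    (hψ : Function.Injective ψ) (hcomm : f' ∘ₗ φ = ψ ∘ₗ f) {v : V'}
    (hv : range φ ⊔ K ∙ v = ⊤) :
    finrank K (range f') = finrank K (range f) + if f' v ∈ (range f).map ψ then 0 else 1 := by
  have hrange : range f' = (range f).map ψ ⊔ K ∙ f' v := by
    rw [range_eq_map, ← hv, Submodule.map_sup, Submodule.map_span, Set.image_singleton,
      ← range_comp, hcomm, range_comp]
  have hψrange : finrank K ((range f).map ψ) = finrank K (range f) :=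
    (Submodule.equivMapOfInjective _ hψ _).finrank_eq.symm
  split_ifs with h
  · rw [hrange, sup_eq_left.2 ((Submodule.span_singleton_le_iff_mem _ _).2 h), hψrange, add_zero]
  · rw [hrange, Submodule.finrank_sup_span_singleton h, hψrange]

theorem LinearMap.range_sup_span_eq_top {K V V' : Type*} [DivisionRing K]
    [AddCommGroup V] [Module K V] [AddCommGroup V'] [Module K V'] [FiniteDimensional K V']
    {φ : V →ₗ[K] V'} (hφ : Function.Injective φ) {v : V'} (hv : v ∉ range φ)
    (hdim : finrank K V' = finrank K V + 1) : range φ ⊔ K ∙ v = ⊤ :=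
  Submodule.eq_top_of_finrank_eq <| by
    rw [Submodule.finrank_sup_span_singleton hv, finrank_range_of_inj hφ, hdim]

theorem IsTri.le_of_ladder {n : ℕ} {y : ℕ → ℕ → ℕ} (hy : IsTri n y) {a j : ℕ} (t : ℕ)
    (ha : 1 ≤ a) (hat : a + t ≤ n) (htj : t < j) (hjn : j ≤ n - a + 1) :
    y a j ≤ y (a + t) (j - t) := by
  induction t with
  | zero => simp
  | succ t ih =>
    have step := hy.2 (a + t + 1) (j - (t + 1)) (by omega) (by omega) (by omega) (by omega)
    rw [show a + t + 1 - 1 = a + t by omega, show j - (t + 1) + 1 = j - t by omega] at step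
    exact (ih (by omega) (by omega)).trans step

theorem IsTri.lt_of_raise {n i j : ℕ} {y : ℕ → ℕ → ℕ} (h : IsTri n (Raise y i j))
    (hi : 1 ≤ i) (hj : 2 ≤ j) (hjn : j ≤ n - i + 1) : y i j < y (i + 1) (j - 1) := by
  have h := h.2 (i + 1) (j - 1) (by omega) (by omega) (by omega) (by omega)
  simp only [Raise, show i + 1 - 1 = i by omega, show j - 1 + 1 = j by omega, and_self,
    if_true, Nat.succ_ne_self, false_and, if_false] at h
  omega

theorem le_Kval_of_lt {y : ℕ → ℕ → ℕ} {i j k : ℕ} (hj : 2 ≤ j) (hjk : j ≤ k)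
    (hlt : y i j < y (i + 1) (j - 1)) : j ≤ Kval y i k :=
  le_sup_of_le_left (le_sup (f := id) (mem_filter.2 ⟨mem_Icc.2 ⟨hj, hjk⟩, hlt⟩))

theorem IsTri.le_Kval_of_raise {n i j k : ℕ} {y : ℕ → ℕ → ℕ} (h : IsTri n (Raise y i j))
    (hi : 1 ≤ i) (hj : 1 ≤ j) (hjn : j ≤ n - i + 1) (hjk : j ≤ k) : j ≤ Kval y i k := by
  rcases (show j = 1 ∨ 2 ≤ j by omega) with rfl | hj
  · exact le_sup_right
  · exact le_Kval_of_lt hj hjk (h.lt_of_raise hi hj hjn)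

theorem eq_raise_of_sum_Icc {n i j₀ : ℕ} {y y' : ℕ → ℕ → ℕ} (hy : IsTri n y) (hy' : IsTri n y')
    (hi : 1 ≤ i) (hin : i ≤ n) (hj₀ : 1 ≤ j₀) (hj₀n : j₀ ≤ n - i + 1)
    (h : ∀ a ℓ, 1 ≤ a → a ≤ n → ℓ ≤ n - a + 1 →
      ∑ j ∈ Icc 1 ℓ, y' a j = ∑ j ∈ Icc 1 ℓ, y a j + if a = i ∧ j₀ ≤ ℓ then 1 else 0) :
    y' = Raise y i j₀ := by
  funext a j
  by_cases hr : 1 ≤ a ∧ a ≤ n ∧ 1 ≤ j ∧ j ≤ n - a + 1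
  · obtain ⟨ha, han, hj, hjn⟩ := hr
    obtain ⟨m, rfl⟩ : ∃ m, j = m + 1 := ⟨j - 1, by omega⟩
    have hm := h a m ha han (by omega)
    have hm1 := h a (m + 1) ha han hjn
    rw [sum_Icc_succ_top (by omega), sum_Icc_succ_top (by omega)] at hm1
    simp only [Raise]
    split_ifs at hm hm1 ⊢ <;> omega
  · rw [hy'.1 a j hr, Raise, if_neg, hy.1 a j hr]
    rintro ⟨rfl, rfl⟩
    exact hr ⟨hi, hin, hj₀, hj₀n⟩

/-- Indices `⟨j, k⟩` of the Jordan basis vectors `u a j k` not killed by `ℓ` steps. -/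
def survivingIndices (n : ℕ) (y : ℕ → ℕ → ℕ) (a ℓ : ℕ) : Finset ((_ : ℕ) × ℕ) :=
  (Icc (ℓ + 1) (n - a + 1)).sigma fun j => Icc 1 (y a j)

theorem mem_survivingIndices {n : ℕ} {y : ℕ → ℕ → ℕ} {a ℓ : ℕ} {q : (_ : ℕ) × ℕ} :
    q ∈ survivingIndices n y a ℓ ↔
      (ℓ + 1 ≤ q.1 ∧ q.1 ≤ n - a + 1) ∧ 1 ≤ q.2 ∧ q.2 ≤ y a q.1 := by
  simp only [survivingIndices, mem_sigma, mem_Icc]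

section JordanBasis

variable {n : ℕ} {w : ℕ → ℕ} {y : ℕ → ℕ → ℕ}
  {x : ∀ m : ℕ, (Fin (w m) → ℂ) →ₗ[ℂ] (Fin (w (m + 1)) → ℂ)}
  {u : ∀ m : ℕ, ℕ → ℕ → (Fin (w m) → ℂ)}

theorem IsJordanBasis.chainMap_apply (hu : IsJordanBasis n w y x u) (hy : IsTri n y)
    {a j k : ℕ} (ℓ : ℕ) (ha : 1 ≤ a) (hal : a + ℓ ≤ n) (hj : 1 ≤ j) (hjn : j ≤ n - a + 1)
    (hk : 1 ≤ k) (hky : k ≤ y a j) :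
    chainMap w x a ℓ (u a j k) = if ℓ < j then u (a + ℓ) (j - ℓ) k else 0 := by
  induction ℓ with
  | zero => simp [chainMap, show 0 < j by omega]
  | succ ℓ ih =>
    rw [chainMap, LinearMap.comp_apply, ih (by omega)]
    by_cases hlj : ℓ < j
    · have hky' : k ≤ y (a + ℓ) (j - ℓ) := hky.trans (hy.le_of_ladder ℓ ha (by omega) hlj hjn)
      rw [if_pos hlj, hu.2 (a + ℓ) (j - ℓ) k (by omega) (by omega) (by omega) (by omega) hk hky']
      by_cases hlj' : ℓ + 1 < j
      · rw [if_pos (by omega), if_pos hlj']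
        congr 1
      · rw [if_neg (by omega), if_neg hlj']
    · rw [if_neg hlj, if_neg (by omega), map_zero]

variable {a ℓ : ℕ}

theorem IsJordanBasis.linearIndependent_survivingIndices (hu : IsJordanBasis n w y x u)
    (hy : IsTri n y) (ha : 1 ≤ a) (hal : a + ℓ ≤ n) :
    LinearIndependent ℂ fun q : survivingIndices n y a ℓ => u (a + ℓ) (q.1.1 - ℓ) q.1.2 := by
  let toBasisIndex (q : survivingIndices n y a ℓ) :
      {p : ℕ × ℕ // 1 ≤ p.1 ∧ p.1 ≤ n - (a + ℓ) + 1 ∧ 1 ≤ p.2 ∧ p.2 ≤ y (a + ℓ) p.1} :=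
    ⟨(q.1.1 - ℓ, q.1.2), by
      obtain ⟨⟨hj, hjn⟩, hk, hky⟩ := mem_survivingIndices.1 q.2
      exact ⟨by omega, by omega, hk, hky.trans (hy.le_of_ladder ℓ ha hal (by omega) hjn)⟩⟩
  refine (hu.1 (a + ℓ) (by omega) hal).1.comp toBasisIndex fun q q' h => ?_
  simp only [toBasisIndex, Subtype.mk.injEq, Prod.mk.injEq] at h
  have hq := mem_survivingIndices.1 q.2
  have hq' := mem_survivingIndices.1 q'.2
  exact Subtype.ext (Sigma.ext (by omega) (heq_of_eq h.2))

theorem IsJordanBasis.range_chainMap (hu : IsJordanBasis n w y x u) (hy : IsTri n y)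
    (ha : 1 ≤ a) (hal : a + ℓ ≤ n) :
    range (chainMap w x a ℓ) = Submodule.span ℂ
      (Set.range fun q : survivingIndices n y a ℓ => u (a + ℓ) (q.1.1 - ℓ) q.1.2) := by
  rw [range_eq_map, ← (hu.1 a ha (by omega)).2, Submodule.map_span, ← Set.range_comp]
  apply Submodule.span_eq_span
  · rintro _ ⟨⟨⟨j, k⟩, hj, hjn, hk, hky⟩, rfl⟩
    simp only [Function.comp_apply, hu.chainMap_apply hy ℓ ha hal hj hjn hk hky]
    split_ifs with hlj
    · exact Submodule.subset_span ⟨⟨⟨j, k⟩, mem_survivingIndices.2 ⟨⟨hlj, hjn⟩, hk, hky⟩⟩, rfl⟩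
    · exact zero_mem _
  · rintro _ ⟨q, rfl⟩
    have hq := mem_survivingIndices.1 q.2
    refine Submodule.subset_span ⟨⟨(q.1.1, q.1.2), by omega, hq.1.2, hq.2⟩, ?_⟩
    simp only [Function.comp_apply,
      hu.chainMap_apply hy ℓ ha hal (by omega) hq.1.2 hq.2.1 hq.2.2, if_pos (by omega : ℓ < q.1.1)]

theorem IsJordanBasis.finrank_range_chainMap (hu : IsJordanBasis n w y x u) (hy : IsTri n y)
    (ha : 1 ≤ a) (hal : a + ℓ ≤ n) :
    finrank ℂ (range (chainMap w x a ℓ)) = ∑ j ∈ Icc (ℓ + 1) (n - a + 1), y a j := by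
  rw [hu.range_chainMap hy ha hal,
    finrank_span_eq_card (hu.linearIndependent_survivingIndices hy ha hal), Fintype.card_coe,
    survivingIndices, card_sigma]
  simp

theorem IsJordanBasis.sum_add_finrank_range_chainMap (hu : IsJordanBasis n w y x u)
    (hy : InP n w y) (ha : 1 ≤ a) (hal : a + ℓ ≤ n) :
    ∑ j ∈ Icc 1 ℓ, y a j + finrank ℂ (range (chainMap w x a ℓ)) = w a := by
  rw [hu.finrank_range_chainMap hy.1 ha hal, ← hy.2 a ha (by omega), udim]
  simpa only [← Icc_add_one_left_eq_Ioc, zero_add] using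
    sum_Ioc_consecutive (y a) (Nat.zero_le ℓ) (show ℓ ≤ n - a + 1 by omega)

end JordanBasis

section Extension

variable {n : ℕ} {w w' : ℕ → ℕ}
  {x : ∀ m : ℕ, (Fin (w m) → ℂ) →ₗ[ℂ] (Fin (w (m + 1)) → ℂ)}
  {x' : ∀ m : ℕ, (Fin (w' m) → ℂ) →ₗ[ℂ] (Fin (w' (m + 1)) → ℂ)}
  {φ : ∀ m : ℕ, (Fin (w m) → ℂ) →ₗ[ℂ] (Fin (w' m) → ℂ)}

theorem chainMap_comp_of_comm
    (hφcomm : ∀ m, 1 ≤ m → m + 1 ≤ n → (x' m).comp (φ m) = (φ (m + 1)).comp (x m))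
    {a : ℕ} (ha : 1 ≤ a) :
    ∀ {ℓ : ℕ}, a + ℓ ≤ n → (chainMap w' x' a ℓ).comp (φ a) = (φ (a + ℓ)).comp (chainMap w x a ℓ)
  | 0, _ => rfl
  | ℓ + 1, hal => by
    rw [chainMap, chainMap, LinearMap.comp_assoc, chainMap_comp_of_comm hφcomm ha (by omega),
      ← LinearMap.comp_assoc, hφcomm (a + ℓ) (by omega) hal, LinearMap.comp_assoc]
    rfl

theorem chainMap_succ_mem_map_range
    (hφcomm : ∀ m, 1 ≤ m → m + 1 ≤ n → (x' m).comp (φ m) = (φ (m + 1)).comp (x m))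
    {a ℓ : ℕ} (ha : 1 ≤ a) (hal : a + ℓ + 1 ≤ n) {v : Fin (w' a) → ℂ}
    (hv : chainMap w' x' a ℓ v ∈ (range (chainMap w x a ℓ)).map (φ (a + ℓ))) :
    chainMap w' x' a (ℓ + 1) v ∈ (range (chainMap w x a (ℓ + 1))).map (φ (a + (ℓ + 1))) := by
  obtain ⟨_, ⟨t, rfl⟩, ht⟩ := hv
  refine ⟨chainMap w x a (ℓ + 1) t, ⟨t, rfl⟩, ?_⟩
  change φ (a + ℓ + 1) (x (a + ℓ) (chainMap w x a ℓ t)) = x' (a + ℓ) (chainMap w' x' a ℓ v)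
  rw [← ht, ← LinearMap.comp_apply, ← hφcomm (a + ℓ) (by omega) hal, LinearMap.comp_apply]

theorem sum_Icc_add_ite_eq_of_comm {y y' : ℕ → ℕ → ℕ}
    {u : ∀ m : ℕ, ℕ → ℕ → (Fin (w m) → ℂ)} {u' : ∀ m : ℕ, ℕ → ℕ → (Fin (w' m) → ℂ)}
    (hu : IsJordanBasis n w y x u) (hy : InP n w y)
    (hu' : IsJordanBasis n w' y' x' u') (hy' : InP n w' y')
    (hφinj : ∀ m, 1 ≤ m → m ≤ n → Function.Injective (φ m))
    (hφcomm : ∀ m, 1 ≤ m → m + 1 ≤ n → (x' m).comp (φ m) = (φ (m + 1)).comp (x m))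
    {a ℓ : ℕ} (ha : 1 ≤ a) (hal : a + ℓ ≤ n) {v : Fin (w' a) → ℂ}
    (hv : range (φ a) ⊔ ℂ ∙ v = ⊤) :
    ∑ j ∈ Icc 1 ℓ, y' a j + (if chainMap w' x' a ℓ v ∈ (range (chainMap w x a ℓ)).map (φ (a + ℓ))
      then 0 else 1) + w a = ∑ j ∈ Icc 1 ℓ, y a j + w' a := by
  have hrank := finrank_range_of_comp_eq_of_sup_span_eq_top (hφinj (a + ℓ) (by omega) hal)
    (chainMap_comp_of_comm hφcomm ha hal) hv
  have hsum := hu.sum_add_finrank_range_chainMap hy ha hal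
  have hsum' := hu'.sum_add_finrank_range_chainMap hy' ha hal
  omega

theorem sum_Icc_eq_add_ite_of_extension {y y' : ℕ → ℕ → ℕ}
    {u : ∀ m : ℕ, ℕ → ℕ → (Fin (w m) → ℂ)} {u' : ∀ m : ℕ, ℕ → ℕ → (Fin (w' m) → ℂ)}
    (hu : IsJordanBasis n w y x u) (hy : InP n w y)
    (hu' : IsJordanBasis n w' y' x' u') (hy' : InP n w' y')
    (hφinj : ∀ m, 1 ≤ m → m ≤ n → Function.Injective (φ m))
    (hφcomm : ∀ m, 1 ≤ m → m + 1 ≤ n → (x' m).comp (φ m) = (φ (m + 1)).comp (x m))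
    {i j₀ : ℕ} (hdim : ∀ m, w' m = w m + (if m = i then 1 else 0))
    {v : Fin (w' i) → ℂ} (hv : v ∉ Set.range (φ i)) (hj₀n : j₀ ≤ n - i + 1)
    (hj₀ : ∀ ℓ ≤ n - i,
      chainMap w' x' i ℓ v ∈ (range (chainMap w x i ℓ)).map (φ (i + ℓ)) ↔ j₀ ≤ ℓ)
    {a ℓ : ℕ} (ha : 1 ≤ a) (han : a ≤ n) (hℓ : ℓ ≤ n - a + 1) :
    ∑ j ∈ Icc 1 ℓ, y' a j = ∑ j ∈ Icc 1 ℓ, y a j + if a = i ∧ j₀ ≤ ℓ then 1 else 0 := by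
  have hwa := hdim a
  rcases hℓ.lt_or_eq with hℓ | rfl
  · by_cases hai : a = i
    · subst hai
      have hrow := sum_Icc_add_ite_eq_of_comm hu hy hu' hy' hφinj hφcomm (ℓ := ℓ) ha (by omega)
        (range_sup_span_eq_top (hφinj a ha han) hv (by simp [hdim]))
      simp only [hj₀ ℓ (by omega), true_and, if_true] at hrow hwa ⊢
      split_ifs at hrow ⊢ <;> omega
    · have hφa : range (φ a) = ⊤ := Submodule.eq_top_of_finrank_eq
        ((finrank_range_of_inj (hφinj a ha han)).trans (by simp [hdim, hai]))
      have hrow := sum_Icc_add_ite_eq_of_comm hu hy hu' hy' hφinj hφcomm (ℓ := ℓ) ha (by omega)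
        (v := 0) (by rw [hφa, top_sup_eq])
      simp only [map_zero, zero_mem, if_true, hai, false_and, if_false] at hrow hwa ⊢
      omega
  · have hsum := hy.2 a ha han
    have hsum' := hy'.2 a ha han
    rw [udim] at hsum hsum'
    split_ifs at hwa ⊢ <;> omega

end Extension

theorem ses_raise_general (n : ℕ) (w w' : ℕ → ℕ)
    (i : ℕ) (hi : 1 ≤ i) (hin : i ≤ n)
    (hdim : ∀ m, w' m = w m + (if m = i then 1 else 0))
    (y y' : ℕ → ℕ → ℕ) (hy : InP n w y) (hy' : InP n w' y')
    (x : ∀ m : ℕ, (Fin (w m) → ℂ) →ₗ[ℂ] (Fin (w (m + 1)) → ℂ))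
    (x' : ∀ m : ℕ, (Fin (w' m) → ℂ) →ₗ[ℂ] (Fin (w' (m + 1)) → ℂ))
    (u : ∀ m : ℕ, ℕ → ℕ → (Fin (w m) → ℂ)) (hu : IsJordanBasis n w y x u)
    (u' : ∀ m : ℕ, ℕ → ℕ → (Fin (w' m) → ℂ)) (hu' : IsJordanBasis n w' y' x' u')
    (φ : ∀ m : ℕ, (Fin (w m) → ℂ) →ₗ[ℂ] (Fin (w' m) → ℂ))
    (hφinj : ∀ m, 1 ≤ m → m ≤ n → Function.Injective (φ m))
    (hφcomm : ∀ m, 1 ≤ m → m + 1 ≤ n → (x' m).comp (φ m) = (φ (m + 1)).comp (x m))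
    (v : Fin (w' i) → ℂ) (hv : v ∉ Set.range (φ i))
    (k : ℕ) (hk0 : chainMap w' x' i k v = 0) :
    ∃ j, 1 ≤ j ∧ j ≤ Kval y i k ∧ y' = Raise y i j := by
  -- The disjunct `n - i < ℓ` stands in for `x'^ℓ v = 0` past the last vertex.
  let P (ℓ : ℕ) : Prop :=
    n - i < ℓ ∨ chainMap w' x' i ℓ v ∈ (range (chainMap w x i ℓ)).map (φ (i + ℓ))
  have hPmono : Monotone P := monotone_nat_of_le_succ fun ℓ hℓ => by
    by_cases hlt : n - i < ℓ + 1
    · exact Or.inl hlt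
    · exact Or.inr (chainMap_succ_mem_map_range hφcomm hi (by omega) (hℓ.resolve_left (by omega)))
  have hPk : P k := by
    by_cases hlt : n - i < k
    · exact Or.inl hlt
    · exact Or.inr (by rw [hk0]; exact zero_mem _)
  have hP0 : ¬ P 0 := by
    rintro (h | ⟨_, ⟨t, rfl⟩, ht⟩)
    · omega
    · exact hv ⟨t, ht⟩
  let j₀ := Nat.find ⟨k, hPk⟩
  have hPj (ℓ : ℕ) : P ℓ ↔ j₀ ≤ ℓ := ⟨Nat.find_min' _, fun h => hPmono h (Nat.find_spec _)⟩
  have hj₀ : 1 ≤ j₀ := Nat.one_le_iff_ne_zero.2 fun h => hP0 ((hPj 0).2 h.le)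
  have hj₀n : j₀ ≤ n - i + 1 := (hPj _).1 (Or.inl (by omega))
  have hraise : y' = Raise y i j₀ :=
    eq_raise_of_sum_Icc hy.1 hy'.1 hi hin hj₀ hj₀n fun _ _ ha han hℓ =>
      sum_Icc_eq_add_ite_of_extension hu hy hu' hy' hφinj hφcomm hdim hv hj₀n
        (fun ℓ hℓ => by simpa [P, show ¬ n - i < ℓ by omega] using hPj ℓ) ha han hℓ
  exact ⟨j₀, hj₀, (hraise ▸ hy'.1).le_Kval_of_raise hi hj₀ hj₀n ((hPj k).1 hPk), hraise⟩

/-- Suppose `0 → M(x) → M(x') → M(e_i) → 0` is a short exact sequence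
of representations of the equioriented `A_n` quiver, `x ∈ O_Y`, `x' ∈ O_{Y'}`, `v ∈ M(x')_i`
has nonzero image in `M(e_i)`, and `k` is minimal with `(x')^k v = 0`.  Then
`Y' = Raise(Y, i, j)` for some `1 ≤ j ≤ K_i(Y, k)`. -/
theorem ses_raise (n : ℕ) (hn : 1 ≤ n) (w w' : ℕ → ℕ)
    (hw0 : ∀ m, m = 0 ∨ n < m → w m = 0) (hw0' : ∀ m, m = 0 ∨ n < m → w' m = 0)
    (i : ℕ) (hi : 1 ≤ i) (hin : i ≤ n)
    (hdim : ∀ m, w' m = w m + (if m = i then 1 else 0))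
    (y y' : ℕ → ℕ → ℕ) (hy : InP n w y) (hy' : InP n w' y')
    (x : ∀ m : ℕ, (Fin (w m) → ℂ) →ₗ[ℂ] (Fin (w (m + 1)) → ℂ))
    (x' : ∀ m : ℕ, (Fin (w' m) → ℂ) →ₗ[ℂ] (Fin (w' (m + 1)) → ℂ))
    (u : ∀ m : ℕ, ℕ → ℕ → (Fin (w m) → ℂ)) (hu : IsJordanBasis n w y x u)
    (u' : ∀ m : ℕ, ℕ → ℕ → (Fin (w' m) → ℂ)) (hu' : IsJordanBasis n w' y' x' u')
    (φ : ∀ m : ℕ, (Fin (w m) → ℂ) →ₗ[ℂ] (Fin (w' m) → ℂ))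
    (hφinj : ∀ m, 1 ≤ m → m ≤ n → Function.Injective (φ m))
    (hφcomm : ∀ m, 1 ≤ m → m + 1 ≤ n → (x' m).comp (φ m) = (φ (m + 1)).comp (x m))
    (v : Fin (w' i) → ℂ) (hv : v ∉ Set.range (φ i))
    (k : ℕ) (hk0 : chainMap w' x' i k v = 0)
    (hkmin : ∀ k', k' < k → chainMap w' x' i k' v ≠ 0) :
    ∃ j, 1 ≤ j ∧ j ≤ Kval y i k ∧ y' = Raise y i j :=
  ses_raise_general n w w' i hi hin hdim y y' hy hy' x x' u hu u' hu' φ hφinj hφcomm v hv k hk0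
end
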